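/- arXiv:2301.08269 — 5 statements merged into one kernel-verified Lean document; each statement's English description precedes it below -/
import Mathlib

section
/- Let θ = m/(ε·**Z**) for ε > 0, m ∈ ℕ with m ≥ 1, and **Z** > 0. If a path p satisfies ζ(p) ≤ **Z**, then its quantized length satisfies ζ^θ(p) ≤ ⌊θ·**Z**⌋ + m. Conversely, if ζ^θ(p) ≤ ⌊θ·**Z**⌋ + m, then ζ(p) ≤ (1+ε)·**Z**. -/
/-!
Since `θ ζᵢ < ⌊θ ζᵢ⌋ + 1` and a sum of floors is at most the floor of the sum, a path of at most
`m` edges has quantized length between `θ ζ(p)` and `⌊θ ζ(p)⌋ + m`. The threshold `⌊θ Z⌋ + m`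
therefore admits every path with `ζ(p) ≤ Z`, and only paths with `θ ζ(p) ≤ θ Z + m`, i.e.
`ζ(p) ≤ Z + m / θ = (1 + ε) Z` for the choice `θ = m / (ε Z)`.
-/

open Finset

section FloorSum

variable {ι K : Type*} [Field K] [LinearOrder K] [IsStrictOrderedRing K] [FloorRing K]
  {s : Finset ι} {x : ι → K}

theorem Finset.sum_floor_add_one_le_floor_add {X : K} {m : ℕ} (hsum : ∑ i ∈ s, x i ≤ X)
    (hcard : #s ≤ m) : ∑ i ∈ s, (⌊x i⌋ + 1) ≤ ⌊X⌋ + (m : ℤ) := by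
  have hfloor : ∑ i ∈ s, ⌊x i⌋ ≤ ⌊X⌋ := by
    rw [Int.le_floor]
    push_cast
    exact (sum_le_sum fun i _ => Int.floor_le (x i)).trans hsum
  rw [sum_add_distrib, sum_const, nsmul_one]
  exact add_le_add hfloor (by exact_mod_cast hcard)

theorem Finset.sum_le_sum_floor_add_one :
    ∑ i ∈ s, x i ≤ ((∑ i ∈ s, (⌊x i⌋ + 1) : ℤ) : K) := by
  push_cast
  exact sum_le_sum fun i _ => (Int.lt_floor_add_one (x i)).le

theorem Finset.sum_le_add_div_of_sum_floor_mul_add_one_le {θ X : K} {m : ℕ} (hθ : 0 < θ)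
    (h : ∑ i ∈ s, (⌊θ * x i⌋ + 1) ≤ ⌊θ * X⌋ + (m : ℤ)) : ∑ i ∈ s, x i ≤ X + m / θ := by
  have hscaled : θ * ∑ i ∈ s, x i ≤ θ * X + m :=
    calc θ * ∑ i ∈ s, x i = ∑ i ∈ s, θ * x i := mul_sum s x θ
      _ ≤ ((∑ i ∈ s, (⌊θ * x i⌋ + 1) : ℤ) : K) := sum_le_sum_floor_add_one
      _ ≤ ((⌊θ * X⌋ + (m : ℤ) : ℤ) : K) := by exact_mod_cast h
      _ ≤ θ * X + m := by push_cast; linarith [Int.floor_le (θ * X)]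
  rw [← le_div_iff₀' hθ] at hscaled
  rwa [add_div, mul_div_cancel_left₀ X hθ.ne'] at hscaled

end FloorSum

theorem approximate_test_quantization_general {ι : Type*} (p : Finset ι) (ζ : ι → ℝ)
    (m : ℕ) (hm1 : 1 ≤ m) (hcard : p.card ≤ m)
    (ε Z : ℝ) (hε : 0 < ε) (hZ : 0 < Z) (θ : ℝ) (hθ : θ = m / (ε * Z)) :
    ((∑ i ∈ p, ζ i ≤ Z) →
      (∑ i ∈ p, (⌊θ * ζ i⌋ + 1) : ℤ) ≤ ⌊θ * Z⌋ + (m : ℤ)) ∧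
    (((∑ i ∈ p, (⌊θ * ζ i⌋ + 1) : ℤ) ≤ ⌊θ * Z⌋ + (m : ℤ)) →
      ∑ i ∈ p, ζ i ≤ (1 + ε) * Z) := by
  have hm : (0 : ℝ) < m := by exact_mod_cast hm1
  have hθpos : 0 < θ := by rw [hθ]; positivity
  have hslack : m / θ = ε * Z := by rw [hθ]; field_simp
  refine ⟨fun hsum => ?_, fun hquant => ?_⟩
  · refine sum_floor_add_one_le_floor_add ?_ hcard
    rw [← mul_sum]
    exact mul_le_mul_of_nonneg_left hsum hθpos.le
  · have := sum_le_add_div_of_sum_floor_mul_add_one_le hθpos hquant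
    rw [hslack] at this
    linarith

/-- Correctness of the approximate test quantization: with `θ = m/(ε·Z)`,
a path with real length at most `Z` has quantized length at most `⌊θZ⌋ + m`;
conversely a path with quantized length at most `⌊θZ⌋ + m` has real length
at most `(1+ε)·Z`. -/
theorem approximate_test_quantization {ι : Type*} (p : Finset ι) (ζ : ι → ℝ)
    (hζ : ∀ i ∈ p, 0 < ζ i) (m : ℕ) (hm1 : 1 ≤ m) (hcard : p.card ≤ m)
    (ε Z : ℝ) (hε : 0 < ε) (hZ : 0 < Z) (θ : ℝ) (hθ : θ = m / (ε * Z)) :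
    ((∑ i ∈ p, ζ i ≤ Z) →
      (∑ i ∈ p, (⌊θ * ζ i⌋ + 1) : ℤ) ≤ ⌊θ * Z⌋ + (m : ℤ)) ∧
    (((∑ i ∈ p, (⌊θ * ζ i⌋ + 1) : ℤ) ≤ ⌊θ * Z⌋ + (m : ℤ)) →
      ∑ i ∈ p, ζ i ≤ (1 + ε) * Z) :=
  approximate_test_quantization_general p ζ m hm1 hcard ε Z hε hZ θ hθ
end

section
/- Suppose the approximate test TEST(**Z**, ε) returns true iff there exists a feasible solution all of whose paths have quantized length (with θ = m/(ε**Z**)) at most ⌊θ**Z**⌋ + m. Let **Z*** be the minimum over feasible solutions of the maximum original path length. Then: TEST(**Z**, ε) = true implies **Z*** ≤ (1+ε)·**Z**, and TEST(**Z**, ε) = false implies **Z*** > **Z**. -/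
/-!
Quantization loses less than one unit per element: `θ ℓ(p) ≤ ζ^θ(p) ≤ ⌊θ ℓ(p)⌋ + |p|`.
If a solution passes the test, the left inequality gives `ℓ(p) ≤ Z + m/θ = (1 + ε) Z` on each path.
If some solution has all `ℓ(p) < (⌊θ Z⌋ + 1)/θ`, the right inequality with `|p| ≤ m` makes it pass
the test. So when the test fails, `Z* ≥ (⌊θ Z⌋ + 1)/θ > Z`.
-/

open Finset

namespace Real

/-- No `BddBelow` hypothesis is needed: otherwise `sInf s = 0 ≤ a`. -/
lemma sInf_le_of_mem_of_nonneg {s : Set ℝ} {a : ℝ} (ha : a ∈ s) (h0 : 0 ≤ a) : sInf s ≤ a := by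
  by_cases h : BddBelow s
  · exact csInf_le h ha
  · exact (sInf_of_not_bddBelow h).le.trans h0

end Real

lemma Set.nonempty_setOf_exists_forall_le {α : Type*} (f : α → ℝ) {S : Set (Finset α)}
    (hS : S.Nonempty) : {M : ℝ | ∃ sol ∈ S, ∀ p ∈ sol, f p ≤ M}.Nonempty := by
  obtain ⟨sol, hsol⟩ := hS
  obtain ⟨M, hM⟩ := (sol.image f).bddAbove
  exact ⟨M, sol, hsol, fun p hp ↦ hM (Finset.mem_coe.2 (Finset.mem_image_of_mem f hp))⟩

section Quantization

variable {ι : Type*} (ζ : ι → ℝ) (θ : ℝ) (p : Finset ι)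

lemma mul_sum_le_sum_floor_add_one :
    θ * ∑ i ∈ p, ζ i ≤ ((∑ i ∈ p, (⌊θ * ζ i⌋ + 1) : ℤ) : ℝ) := by
  push_cast
  rw [mul_sum]
  exact sum_le_sum fun i _ ↦ (Int.lt_floor_add_one _).le

lemma sum_floor_add_one_le_floor_mul_sum_add_card :
    (∑ i ∈ p, (⌊θ * ζ i⌋ + 1) : ℤ) ≤ ⌊θ * ∑ i ∈ p, ζ i⌋ + p.card := by
  have hfloor : ∑ i ∈ p, ⌊θ * ζ i⌋ ≤ ⌊θ * ∑ i ∈ p, ζ i⌋ := by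
    rw [Int.le_floor, mul_sum]
    push_cast
    exact sum_le_sum fun i _ ↦ Int.floor_le _
  rw [sum_add_distrib, sum_const, nsmul_eq_mul, mul_one]
  omega

lemma sum_le_add_div_of_sum_floor_add_one_le {Z : ℝ} {k : ℕ} (hθ : 0 < θ)
    (h : (∑ i ∈ p, (⌊θ * ζ i⌋ + 1) : ℤ) ≤ ⌊θ * Z⌋ + k) :
    ∑ i ∈ p, ζ i ≤ Z + k / θ := by
  have hcast : ((∑ i ∈ p, (⌊θ * ζ i⌋ + 1) : ℤ) : ℝ) ≤ ⌊θ * Z⌋ + k := by exact_mod_cast h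
  refine le_of_mul_le_mul_left ?_ hθ
  calc θ * ∑ i ∈ p, ζ i ≤ ⌊θ * Z⌋ + k := (mul_sum_le_sum_floor_add_one ζ θ p).trans hcast
    _ ≤ θ * Z + k := by gcongr; exact Int.floor_le _
    _ = θ * (Z + k / θ) := by field_simp

lemma sum_floor_add_one_le_of_mul_sum_lt {Z : ℝ} {k : ℕ} (hcard : p.card ≤ k)
    (h : θ * ∑ i ∈ p, ζ i < ⌊θ * Z⌋ + 1) :
    (∑ i ∈ p, (⌊θ * ζ i⌋ + 1) : ℤ) ≤ ⌊θ * Z⌋ + k := by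
  have hfloor : ⌊θ * ∑ i ∈ p, ζ i⌋ < ⌊θ * Z⌋ + 1 := Int.floor_lt.2 (by exact_mod_cast h)
  have := sum_floor_add_one_le_floor_mul_sum_add_card ζ θ p
  omega

end Quantization

theorem approximate_test_correct_general {ι : Type*} (ζ : ι → ℝ)
    (m : ℕ) (hm : 1 ≤ m)
    (S : Set (Finset (Finset ι))) (hS : S.Nonempty)
    (hcard : ∀ sol ∈ S, ∀ p ∈ sol, p.card ≤ m)
    (Z ε : ℝ) (hZ : 0 < Z) (hε : 0 < ε) (θ : ℝ) (hθ : θ = m / (ε * Z)) :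
    ((∃ sol ∈ S, ∀ p ∈ sol, (∑ i ∈ p, (⌊θ * ζ i⌋ + 1) : ℤ) ≤ ⌊θ * Z⌋ + (m : ℤ)) →
      sInf {M : ℝ | ∃ sol ∈ S, ∀ p ∈ sol, ∑ i ∈ p, ζ i ≤ M} ≤ (1 + ε) * Z) ∧
    ((¬ ∃ sol ∈ S, ∀ p ∈ sol, (∑ i ∈ p, (⌊θ * ζ i⌋ + 1) : ℤ) ≤ ⌊θ * Z⌋ + (m : ℤ)) →
      Z < sInf {M : ℝ | ∃ sol ∈ S, ∀ p ∈ sol, ∑ i ∈ p, ζ i ≤ M}) := by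
  have hm0 : (0 : ℝ) < m := by exact_mod_cast hm
  have hθ0 : 0 < θ := by rw [hθ]; positivity
  have hmθ : (m : ℝ) / θ = ε * Z := by rw [hθ]; field_simp
  refine ⟨fun ⟨sol, hsol, htest⟩ ↦ Real.sInf_le_of_mem_of_nonneg ⟨sol, hsol, fun p hp ↦ ?_⟩
    (by positivity), fun hfail ↦ ?_⟩
  · have := sum_le_add_div_of_sum_floor_add_one_le ζ θ p hθ0 (htest p hp)
    rw [hmθ] at this
    linarith
  set c := (⌊θ * Z⌋ + 1 : ℝ) / θ
  have hZc : Z < c := (lt_div_iff₀' hθ0).2 (Int.lt_floor_add_one _)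
  refine hZc.trans_le (le_csInf (Set.nonempty_setOf_exists_forall_le _ hS) ?_)
  rintro M ⟨sol, hsol, hM⟩
  by_contra! hMc
  refine hfail ⟨sol, hsol, fun p hp ↦
    sum_floor_add_one_le_of_mul_sum_lt ζ θ p (hcard sol hsol p hp) ?_⟩
  calc θ * ∑ i ∈ p, ζ i ≤ θ * M := mul_le_mul_of_nonneg_left (hM p hp) hθ0.le
    _ < ⌊θ * Z⌋ + 1 := (lt_div_iff₀' hθ0).1 hMc

/-- Correctness of the approximate testing procedure TEST(Z, ε): solutions are
finite sets of paths (finite sets of elements with positive lengths, at most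
`m` elements each). `Z* = sInf` over solutions of the max real path length.
If TEST returns true then `Z* ≤ (1+ε)Z`; if it returns false then `Z* > Z`. -/
theorem approximate_test_correct {ι : Type*} (ζ : ι → ℝ) (hζ : ∀ i, 0 < ζ i)
    (m : ℕ) (hm : 1 ≤ m)
    (S : Set (Finset (Finset ι))) (hS : S.Nonempty)
    (hne : ∀ sol ∈ S, sol.Nonempty)
    (hcard : ∀ sol ∈ S, ∀ p ∈ sol, p.card ≤ m)
    (Z ε : ℝ) (hZ : 0 < Z) (hε : 0 < ε) (θ : ℝ) (hθ : θ = m / (ε * Z)) :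
    ((∃ sol ∈ S, ∀ p ∈ sol, (∑ i ∈ p, (⌊θ * ζ i⌋ + 1) : ℤ) ≤ ⌊θ * Z⌋ + (m : ℤ)) →
      sInf {M : ℝ | ∃ sol ∈ S, ∀ p ∈ sol, ∑ i ∈ p, ζ i ≤ M} ≤ (1 + ε) * Z) ∧
    ((¬ ∃ sol ∈ S, ∀ p ∈ sol, (∑ i ∈ p, (⌊θ * ζ i⌋ + 1) : ℤ) ≤ ⌊θ * Z⌋ + (m : ℤ)) →
      Z < sInf {M : ℝ | ∃ sol ∈ S, ∀ p ∈ sol, ∑ i ∈ p, ζ i ≤ M}) :=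
  approximate_test_correct_general ζ m hm S hS hcard Z ε hZ hε θ hθ
end

section
/- Let sorted descending values ζ_{[1]} ≥ ζ_{[2]} ≥ ... be the element lengths of a network with |N| nodes, and suppose index i is such that the network restricted to elements of length ≤ ζ_{[i−1]} admits a feasible solution (with every path using at most 2|N|−3 elements), but the restriction to elements of length ≤ ζ_{[i]} does not. Then the optimal minimum longest-path length **Z*** satisfies ζ_{[i−1]} ≤ **Z*** ≤ (2|N|−3)·ζ_{[i−1]}. -/
/-!
Every feasible solution contains a path through an element of length at least `a`, and lengths are
positive, so its longest path is at least `a`. Conversely, the solution that avoids elements longer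
than `a` has paths of at most `2n − 3` elements, each of length at most `a`.
-/

open Finset

section

variable {ι : Type*}

/-- `Z*` is the infimum of this set. -/
def pathLengthBounds (ζ : ι → ℝ) (S : Set (Finset (Finset ι))) : Set ℝ :=
  {M | ∃ sol ∈ S, ∀ p ∈ sol, ∑ i ∈ p, ζ i ≤ M}

theorem le_of_mem_pathLengthBounds {ζ : ι → ℝ} (hζ : ∀ i, 0 ≤ ζ i)
    {S : Set (Finset (Finset ι))} {a : ℝ} (hcrit : ∀ sol ∈ S, ∃ p ∈ sol, ∃ i ∈ p, a ≤ ζ i)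
    {M : ℝ} (hM : M ∈ pathLengthBounds ζ S) : a ≤ M := by
  obtain ⟨sol, hsol, hbound⟩ := hM
  obtain ⟨p, hp, i, hi, hai⟩ := hcrit sol hsol
  calc a ≤ ζ i := hai
    _ ≤ ∑ j ∈ p, ζ j := single_le_sum (fun j _ => hζ j) hi
    _ ≤ M := hbound p hp

theorem mul_mem_pathLengthBounds {ζ : ι → ℝ} {S : Set (Finset (Finset ι))} {sol : Finset (Finset ι)}
    (hsol : sol ∈ S) {k : ℕ} (hcard : ∀ p ∈ sol, p.card ≤ k) {a : ℝ} (ha : 0 ≤ a)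
    (hle : ∀ p ∈ sol, ∀ i ∈ p, ζ i ≤ a) : (k : ℝ) * a ∈ pathLengthBounds ζ S := by
  refine ⟨sol, hsol, fun p hp => ?_⟩
  calc ∑ i ∈ p, ζ i ≤ p.card • a := sum_le_card_nsmul p ζ a (hle p hp)
    _ = p.card * a := nsmul_eq_mul _ _
    _ ≤ k * a := by gcongr; exact_mod_cast hcard p hp

end

theorem sorting_trimming_bounds_general {ι : Type*} (ζ : ι → ℝ) (hζ : ∀ i, 0 < ζ i)
    (n : ℕ)
    (S : Set (Finset (Finset ι)))
    (hcard : ∀ sol ∈ S, ∀ p ∈ sol, p.card ≤ 2 * n - 3)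
    (a : ℝ) (ha : 0 < a)
    (hfeas : ∃ sol ∈ S, ∀ p ∈ sol, ∀ i ∈ p, ζ i ≤ a)
    (hcrit : ∀ sol ∈ S, ∃ p ∈ sol, ∃ i ∈ p, a ≤ ζ i) :
    a ≤ sInf {M : ℝ | ∃ sol ∈ S, ∀ p ∈ sol, ∑ i ∈ p, ζ i ≤ M} ∧
    sInf {M : ℝ | ∃ sol ∈ S, ∀ p ∈ sol, ∑ i ∈ p, ζ i ≤ M} ≤ ((2 * n - 3 : ℕ) : ℝ) * a := by
  obtain ⟨sol, hsol, hle⟩ := hfeas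
  have hmem : ((2 * n - 3 : ℕ) : ℝ) * a ∈ pathLengthBounds ζ S :=
    mul_mem_pathLengthBounds hsol (hcard sol hsol) ha.le hle
  have hlower : ∀ M ∈ pathLengthBounds ζ S, a ≤ M :=
    fun _ => le_of_mem_pathLengthBounds (fun i => (hζ i).le) hcrit
  exact ⟨le_csInf ⟨_, hmem⟩ hlower, csInf_le ⟨a, hlower⟩ hmem⟩

/-- Sorting-and-trimming bound: if the network restricted to elements of length
at most `a = ζ_{[i−1]}` admits a feasible solution (paths of at most `2n−3`
positive-length elements), while every feasible solution must use some element
of length at least `a`, then the optimal minimum longest-path length `Z*`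
satisfies `a ≤ Z* ≤ (2n−3)·a`. -/
theorem sorting_trimming_bounds {ι : Type*} (ζ : ι → ℝ) (hζ : ∀ i, 0 < ζ i)
    (n : ℕ) (hn : 2 ≤ 2 * n - 3)
    (S : Set (Finset (Finset ι))) (hS : S.Nonempty)
    (hcard : ∀ sol ∈ S, ∀ p ∈ sol, p.card ≤ 2 * n - 3)
    (a : ℝ) (ha : 0 < a)
    (hfeas : ∃ sol ∈ S, ∀ p ∈ sol, ∀ i ∈ p, ζ i ≤ a)
    (hcrit : ∀ sol ∈ S, ∃ p ∈ sol, ∃ i ∈ p, a ≤ ζ i) :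
    a ≤ sInf {M : ℝ | ∃ sol ∈ S, ∀ p ∈ sol, ∑ i ∈ p, ζ i ≤ M} ∧
    sInf {M : ℝ | ∃ sol ∈ S, ∀ p ∈ sol, ∑ i ∈ p, ζ i ≤ M} ≤ ((2 * n - 3 : ℕ) : ℝ) * a :=
  sorting_trimming_bounds_general ζ hζ n S hcard a ha hfeas hcrit
end

section
/- With θ = m/(ε·LB) and LB ≤ **Z***, the optimal quantized longest path length satisfies **Z**^θ ≤ θ·(1+ε)·**Z***. -/
/-!
Rounding adds less than one unit per element, so a path of at most `m` elements has quantized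
length at most `θ ζ(p) + m`. Applied to a real-optimal solution this gives `Z^θ ≤ θ Z* + m`,
and `m = θ ε LB ≤ θ ε Z*` by the choice of `θ`.
-/

open Finset Pointwise

theorem Int.cast_sum_floor_add_one_le {ι : Type*} (p : Finset ι) (θ : ℝ) (ζ : ι → ℝ) :
    ((∑ i ∈ p, (⌊θ * ζ i⌋ + 1) : ℤ) : ℝ) ≤ θ * ∑ i ∈ p, ζ i + #p := by
  push_cast
  rw [sum_add_distrib, mul_sum, sum_const, nsmul_one]
  gcongr with i
  exact Int.floor_le _

/-- The junk value `sInf t = 0` of an unbounded `t` is why `0 ≤ a * sInf s + b` is needed. -/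
theorem Real.sInf_le_mul_sInf_add {s t : Set ℝ} {a b : ℝ} (ha : 0 ≤ a) (hs : s.Nonempty)
    (hst : ∀ x ∈ s, a * x + b ∈ t) (hb : 0 ≤ a * sInf s + b) : sInf t ≤ a * sInf s + b := by
  by_cases ht : BddBelow t
  · have h : sInf t - b ≤ sInf (a • s) := by
      refine le_csInf hs.smul_set ?_
      rintro _ ⟨x, hx, rfl⟩
      have := csInf_le ht (hst x hx)
      show sInf t - b ≤ a * x
      linarith
    rw [Real.sInf_smul_of_nonneg ha, smul_eq_mul] at h
    linarith
  · rw [Real.sInf_of_not_bddBelow ht]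
    exact hb

/-- Its infimum is `Z*` for the real path lengths and `Z^θ` for the quantized ones. -/
def feasibleMaxima {ι : Type*} (S : Set (Finset (Finset ι))) (len : Finset ι → ℝ) : Set ℝ :=
  {M | ∃ sol ∈ S, ∀ p ∈ sol, len p ≤ M}

theorem sInf_feasibleMaxima_le_mul_add {ι : Type*} {S : Set (Finset (Finset ι))}
    {len len' : Finset ι → ℝ} {a b : ℝ} (ha : 0 ≤ a) (hS : (feasibleMaxima S len).Nonempty)
    (hlen : ∀ sol ∈ S, ∀ p ∈ sol, len' p ≤ a * len p + b)
    (hb : 0 ≤ a * sInf (feasibleMaxima S len) + b) :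
    sInf (feasibleMaxima S len') ≤ a * sInf (feasibleMaxima S len) + b := by
  refine Real.sInf_le_mul_sInf_add ha hS ?_ hb
  rintro M ⟨sol, hsol, hM⟩
  exact ⟨sol, hsol, fun p hp => (hlen sol hsol p hp).trans (by gcongr; exact hM p hp)⟩

theorem quantized_optimum_approx_general {ι : Type*} (ζ : ι → ℝ)
    (m : ℕ)
    (S : Set (Finset (Finset ι)))
    (hcard : ∀ sol ∈ S, ∀ p ∈ sol, p.card ≤ m)
    (LB ε : ℝ) (hLB : 0 < LB) (hε : 0 < ε)
    (θ : ℝ) (hθ : θ = m / (ε * LB))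
    (hlow : LB ≤ sInf {M : ℝ | ∃ sol ∈ S, ∀ p ∈ sol, ∑ i ∈ p, ζ i ≤ M}) :
    sInf {M : ℝ | ∃ sol ∈ S, ∀ p ∈ sol, ((∑ i ∈ p, (⌊θ * ζ i⌋ + 1) : ℤ) : ℝ) ≤ M} ≤
      θ * (1 + ε) * sInf {M : ℝ | ∃ sol ∈ S, ∀ p ∈ sol, ∑ i ∈ p, ζ i ≤ M} := by
  change LB ≤ sInf (feasibleMaxima S fun p => ∑ i ∈ p, ζ i) at hlow
  set Z := sInf (feasibleMaxima S fun p => ∑ i ∈ p, ζ i)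
  have hθ0 : 0 ≤ θ := hθ ▸ by positivity
  have hfeas : (feasibleMaxima S fun p => ∑ i ∈ p, ζ i).Nonempty := by
    refine Set.nonempty_iff_ne_empty.2 fun h => ?_
    simp only [Z, h, Real.sInf_empty] at hlow
    linarith
  have hm : (m : ℝ) ≤ θ * ε * Z :=
    calc (m : ℝ) = θ * ε * LB := by rw [hθ]; field_simp
      _ ≤ θ * ε * Z := by gcongr
  have hquant : sInf (feasibleMaxima S fun p => ((∑ i ∈ p, (⌊θ * ζ i⌋ + 1) : ℤ) : ℝ)) ≤
      θ * Z + m := by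
    refine sInf_feasibleMaxima_le_mul_add hθ0 hfeas (fun sol hsol p hp => ?_)
      (add_nonneg (mul_nonneg hθ0 (hLB.le.trans hlow)) m.cast_nonneg)
    exact (Int.cast_sum_floor_add_one_le p θ ζ).trans
      (by gcongr; exact_mod_cast hcard sol hsol p hp)
  calc _ ≤ θ * Z + m := hquant
    _ ≤ θ * (1 + ε) * Z := by linarith

/-- With `θ = m/(ε·LB)` and `LB ≤ Z*`, the optimal quantized longest path
length satisfies `Z^θ ≤ θ·(1+ε)·Z*`, where `Z*` (resp. `Z^θ`) is the infimum
over feasible solutions of the maximum real (resp. quantized) path length. -/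
theorem quantized_optimum_approx {ι : Type*} (ζ : ι → ℝ) (hζ : ∀ i, 0 < ζ i)
    (m : ℕ) (hm : 1 ≤ m)
    (S : Set (Finset (Finset ι))) (hS : S.Nonempty)
    (hne : ∀ sol ∈ S, sol.Nonempty)
    (hcard : ∀ sol ∈ S, ∀ p ∈ sol, p.card ≤ m)
    (LB ε : ℝ) (hLB : 0 < LB) (hε : 0 < ε)
    (θ : ℝ) (hθ : θ = m / (ε * LB))
    (hlow : LB ≤ sInf {M : ℝ | ∃ sol ∈ S, ∀ p ∈ sol, ∑ i ∈ p, ζ i ≤ M}) :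
    sInf {M : ℝ | ∃ sol ∈ S, ∀ p ∈ sol, ((∑ i ∈ p, (⌊θ * ζ i⌋ + 1) : ℤ) : ℝ) ≤ M} ≤
      θ * (1 + ε) * sInf {M : ℝ | ∃ sol ∈ S, ∀ p ∈ sol, ∑ i ∈ p, ζ i ≤ M} :=
  quantized_optimum_approx_general ζ m S hcard LB ε hLB hε θ hθ hlow
end

section
/- If the output of the two-stage bisection is a feasible solution whose maximum quantized path length Z⁺ satisfies Z⁺ ≤ **Z**^θ (by optimality of bisection on integers), then its maximum real path length **Z**⁺ satisfies **Z**⁺ ≤ Z⁺/θ ≤ (1+ε)·**Z***, i.e., the algorithm is a (1+ε)-approximation. -/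
/-! Quantizing each weight `ζ i` to `⌊θ ζ i⌋ + 1` overestimates `θ ζ i` by at most one, so on a
path of at most `m` elements the quantized length lies between `θ` times the real length and that
plus `m`. The first inequality bounds the real lengths of the output by `Z⁺/θ`; the second shows
that the quantized optimum is at most `θ Z* + m`, whence `Z⁺/θ ≤ Z* + m/θ = Z* + ε LB`, and
`LB ≤ Z*` finishes the argument. -/

open Finset

section MaxCost

variable {α : Type*}

/-- `sInf (maxCostBounds S w)` is the min–max objective: `Z*` for the real path length `w`, and
`Z^θ` for the quantized one. -/
def maxCostBounds (S : Set (Finset α)) (w : α → ℝ) : Set ℝ :=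
  {M | ∃ s ∈ S, ∀ p ∈ s, w p ≤ M}

theorem maxCostBounds_nonempty {S : Set (Finset α)} (hS : S.Nonempty) (w : α → ℝ) :
    (maxCostBounds S w).Nonempty := by
  obtain ⟨s, hs⟩ := hS
  obtain ⟨M, hM⟩ := (s.image w).bddAbove
  exact ⟨M, s, hs, fun p hp => hM (mem_image_of_mem w hp)⟩

theorem bddBelow_maxCostBounds {S : Set (Finset α)} {w : α → ℝ} {c : ℝ}
    (hne : ∀ s ∈ S, s.Nonempty) (hc : ∀ s ∈ S, ∀ p ∈ s, c ≤ w p) :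
    BddBelow (maxCostBounds S w) := by
  refine ⟨c, ?_⟩
  rintro M ⟨s, hs, hM⟩
  obtain ⟨p, hp⟩ := hne s hs
  exact (hc s hs p hp).trans (hM p hp)

theorem sInf_maxCostBounds_le_of_le_affine {S : Set (Finset α)} {w w' : α → ℝ} {a b : ℝ}
    (ha : 0 < a) (hS : S.Nonempty) (hbdd : BddBelow (maxCostBounds S w'))
    (h : ∀ s ∈ S, ∀ p ∈ s, w' p ≤ a * w p + b) :
    sInf (maxCostBounds S w') ≤ a * sInf (maxCostBounds S w) + b := by
  have hdiv : (sInf (maxCostBounds S w') - b) / a ≤ sInf (maxCostBounds S w) := by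
    refine le_csInf (maxCostBounds_nonempty hS w) ?_
    rintro M ⟨s, hs, hM⟩
    have hmem : a * M + b ∈ maxCostBounds S w' :=
      ⟨s, hs, fun p hp => (h s hs p hp).trans (by gcongr; exact hM p hp)⟩
    rw [div_le_iff₀ ha]
    linarith [csInf_le hbdd hmem]
  rw [div_le_iff₀ ha] at hdiv
  linarith

end MaxCost

section Quantization

variable {ι : Type*}

noncomputable def quantLength (θ : ℝ) (ζ : ι → ℝ) (p : Finset ι) : ℤ :=
  ∑ i ∈ p, (⌊θ * ζ i⌋ + 1)

theorem mul_sum_le_quantLength (θ : ℝ) (ζ : ι → ℝ) (p : Finset ι) :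
    θ * ∑ i ∈ p, ζ i ≤ quantLength θ ζ p := by
  rw [quantLength, mul_sum]
  push_cast
  exact sum_le_sum fun i _ => (Int.lt_floor_add_one _).le

theorem quantLength_le (θ : ℝ) (ζ : ι → ℝ) (p : Finset ι) :
    (quantLength θ ζ p : ℝ) ≤ θ * ∑ i ∈ p, ζ i + p.card := by
  rw [quantLength, mul_sum, ← nsmul_one, ← sum_const, ← sum_add_distrib]
  push_cast
  exact sum_le_sum fun i _ => by linarith [Int.floor_le (θ * ζ i)]

theorem quantLength_nonneg {θ : ℝ} {ζ : ι → ℝ} (hθ : 0 ≤ θ) (hζ : ∀ i, 0 ≤ ζ i)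
    (p : Finset ι) : 0 ≤ quantLength θ ζ p :=
  sum_nonneg fun i _ => by
    have := Int.floor_nonneg.mpr (mul_nonneg hθ (hζ i))
    omega

end Quantization

theorem bisection_approximation_general {ι : Type*} (ζ : ι → ℝ) (hζ : ∀ i, 0 < ζ i)
    (m : ℕ) (hm : 1 ≤ m)
    (S : Set (Finset (Finset ι))) (hS : S.Nonempty)
    (hne : ∀ sol ∈ S, sol.Nonempty)
    (hcard : ∀ sol ∈ S, ∀ p ∈ sol, p.card ≤ m)
    (LB ε : ℝ) (hLB : 0 < LB) (hε : 0 < ε)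
    (θ : ℝ) (hθ : θ = m / (ε * LB))
    (hlow : LB ≤ sInf {M : ℝ | ∃ sol ∈ S, ∀ p ∈ sol, ∑ i ∈ p, ζ i ≤ M})
    (sol : Finset (Finset ι)) (Zplus : ℤ)
    (hmax : ∀ p ∈ sol, (∑ i ∈ p, (⌊θ * ζ i⌋ + 1) : ℤ) ≤ Zplus)
    (hopt : (Zplus : ℝ) ≤
      sInf {M : ℝ | ∃ s ∈ S, ∀ p ∈ s, ((∑ i ∈ p, (⌊θ * ζ i⌋ + 1) : ℤ) : ℝ) ≤ M}) :
    (∀ p ∈ sol, ∑ i ∈ p, ζ i ≤ (Zplus : ℝ) / θ) ∧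
    (Zplus : ℝ) / θ ≤ (1 + ε) * sInf {M : ℝ | ∃ s ∈ S, ∀ p ∈ s, ∑ i ∈ p, ζ i ≤ M} := by
  change LB ≤ sInf (maxCostBounds S fun p => ∑ i ∈ p, ζ i) at hlow
  change (Zplus : ℝ) ≤ sInf (maxCostBounds S fun p => (quantLength θ ζ p : ℝ)) at hopt
  change _ ∧ _ ≤ (1 + ε) * sInf (maxCostBounds S fun p => ∑ i ∈ p, ζ i)
  set Zstar := sInf (maxCostBounds S fun p => ∑ i ∈ p, ζ i)
  have hmpos : (0 : ℝ) < m := by exact_mod_cast hm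
  have hθpos : 0 < θ := by rw [hθ]; positivity
  have hmθ : (m : ℝ) / θ = ε * LB := by rw [hθ]; field_simp
  refine ⟨fun p hp => ?_, ?_⟩
  · rw [le_div_iff₀ hθpos, mul_comm]
    exact (mul_sum_le_quantLength θ ζ p).trans (by exact_mod_cast hmax p hp)
  have hquant : (Zplus : ℝ) ≤ θ * Zstar + m := by
    refine hopt.trans (sInf_maxCostBounds_le_of_le_affine hθpos hS
      (bddBelow_maxCostBounds (c := 0) hne fun s _ p _ => ?_) fun s hs p hp => ?_)
    · exact_mod_cast quantLength_nonneg hθpos.le (fun i => (hζ i).le) p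
    · exact (quantLength_le θ ζ p).trans (by gcongr; exact_mod_cast hcard s hs p hp)
  calc (Zplus : ℝ) / θ ≤ Zstar + m / θ := by
        rw [div_le_iff₀ hθpos, add_mul, div_mul_cancel₀ _ hθpos.ne']; linarith
    _ = Zstar + ε * LB := by rw [hmθ]
    _ ≤ Zstar + ε * Zstar := by gcongr
    _ = (1 + ε) * Zstar := by ring

/-- (1+ε)-approximation of the two-stage bisection: if the output is a feasible
solution whose maximum quantized path length `Z⁺` satisfies `Z⁺ ≤ Z^θ`, then
every real path length is at most `Z⁺/θ`, and `Z⁺/θ ≤ (1+ε)·Z*`. -/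
theorem bisection_approximation {ι : Type*} (ζ : ι → ℝ) (hζ : ∀ i, 0 < ζ i)
    (m : ℕ) (hm : 1 ≤ m)
    (S : Set (Finset (Finset ι))) (hS : S.Nonempty)
    (hne : ∀ sol ∈ S, sol.Nonempty)
    (hcard : ∀ sol ∈ S, ∀ p ∈ sol, p.card ≤ m)
    (LB ε : ℝ) (hLB : 0 < LB) (hε : 0 < ε)
    (θ : ℝ) (hθ : θ = m / (ε * LB))
    (hlow : LB ≤ sInf {M : ℝ | ∃ sol ∈ S, ∀ p ∈ sol, ∑ i ∈ p, ζ i ≤ M})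
    (sol : Finset (Finset ι)) (hsol : sol ∈ S) (Zplus : ℤ)
    (hmax : ∀ p ∈ sol, (∑ i ∈ p, (⌊θ * ζ i⌋ + 1) : ℤ) ≤ Zplus)
    (hopt : (Zplus : ℝ) ≤
      sInf {M : ℝ | ∃ s ∈ S, ∀ p ∈ s, ((∑ i ∈ p, (⌊θ * ζ i⌋ + 1) : ℤ) : ℝ) ≤ M}) :
    (∀ p ∈ sol, ∑ i ∈ p, ζ i ≤ (Zplus : ℝ) / θ) ∧
    (Zplus : ℝ) / θ ≤ (1 + ε) * sInf {M : ℝ | ∃ s ∈ S, ∀ p ∈ s, ∑ i ∈ p, ζ i ≤ M} :=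
  bisection_approximation_general ζ hζ m hm S hS hne hcard LB ε hLB hε θ hθ hlow sol Zplus hmax hopt
end
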